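/- arXiv:1808.03970 — 5 statements merged into one kernel-verified Lean document; each statement's English description precedes it below -/
import Mathlib

section
/- Let α ∈ (0,1) and let 0 < κ < 1 − α. Then P(for every set X of exactly ⌊κ·n^α·ln n⌋ vertices of G(n, n^{−α}) there exists a vertex outside X having no neighbor in X) → 1 as n → ∞. -/
open Filter FirstOrder

noncomputable section

/-! ### The binomial random graph `G(n,p)` -/

/-- The number of edges of a simple graph. -/
noncomputable def edgeCt {n : ℕ} (G : SimpleGraph (Fin n)) : ℕ := Nat.card G.edgeSet

open scoped Classical in
/-- `prob n p Q` is the probability that the binomial random graph `G(n,p)` (on vertex set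
`Fin n`) has property `Q`: the sum over all graphs `G` with `Q G` of
`p^{e(G)} (1-p)^{n(n-1)/2 - e(G)}`. -/
noncomputable def prob (n : ℕ) (p : ℝ) (Q : SimpleGraph (Fin n) → Prop) : ℝ :=
  ∑ G : SimpleGraph (Fin n),
    if Q G then p ^ edgeCt G * (1 - p) ^ (n * (n - 1) / 2 - edgeCt G) else 0

/-- `expec n p W` is the expectation of a real-valued function `W` of the binomial random
graph `G(n,p)`. -/
noncomputable def expec (n : ℕ) (p : ℝ) (W : SimpleGraph (Fin n) → ℝ) : ℝ :=
  ∑ G : SimpleGraph (Fin n),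
    W G * (p ^ edgeCt G * (1 - p) ^ (n * (n - 1) / 2 - edgeCt G))

/-! ### The graphs `W_a^γ` and `W_a^{γ,*}` -/

/-- `ωr r a = (r^a − 1)/(r−1)`, the number of vertices of the perfect `r`-ary tree of
depth `a − 1`. -/
def ωr (r a : ℕ) : ℕ := (r ^ a - 1) / (r - 1)

/-- The depth of the node with (0-based) breadth-first (heap) index `j` in the infinite
`r`-ary tree: the root has index 0, and the parent of node `j ≥ 1` is node `(j−1)/r`. -/
def heapDepth (r : ℕ) : ℕ → ℕ
  | 0 => 0
  | j + 1 => heapDepth r (j / r) + 1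
  decreasing_by exact Nat.lt_succ_of_le (Nat.div_le_self _ _)

/-- The vertex set of `W_a^γ`: the path `F₁` on `a` vertices (`Sum.inl`), together with,
for each of the `(4^a−1)/3` vertices `i` of the perfect 4-ary tree `F₂` (in breadth-first
order), the vertex `(i,0)` of `F₂` itself and the `γ` inner vertices `(i,1),…,(i,γ)` of the
path `P_{γ+2}` joining `i` to the vertex of `F₁` at the same distance from the root. -/
abbrev WVert (γ a : ℕ) := Fin a ⊕ (Fin (ωr 4 a) × Fin (γ + 1))

/-- Base (directed) adjacency relation generating `W_a^γ`: consecutive `F₁`-vertices;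
the last inner path vertex `(i,γ)` is joined to the `F₁`-vertex at depth of `i`;
consecutive vertices along each `P_{γ+2}`; and tree edges of the perfect 4-ary tree
(in heap indexing, `j` is the parent of `i ≥ 1` iff `j = (i−1)/4`). -/
def Wbase (γ a : ℕ) : WVert γ a → WVert γ a → Prop
  | Sum.inl u, Sum.inl v => (v : ℕ) = (u : ℕ) + 1
  | Sum.inl u, Sum.inr iv => (iv.2 : ℕ) = γ ∧ heapDepth 4 (iv.1 : ℕ) = (u : ℕ)
  | Sum.inr _, Sum.inl _ => False
  | Sum.inr iv, Sum.inr jw =>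
      (iv.1 = jw.1 ∧ (jw.2 : ℕ) = (iv.2 : ℕ) + 1) ∨
      ((iv.2 : ℕ) = 0 ∧ (jw.2 : ℕ) = 0 ∧ 1 ≤ (iv.1 : ℕ) ∧ (jw.1 : ℕ) = ((iv.1 : ℕ) - 1) / 4)

/-- The graph `W_a^γ`. -/
def WG (γ a : ℕ) : SimpleGraph (WVert γ a) := SimpleGraph.fromRel (Wbase γ a)

/-- The vertex set of `W_a^{γ,*}` (with `ω₁ = ωr r a`, `ω₂ = ωr r ω₁`), as five pieces:
the path `F₁` on `a` vertices; the tree `F₂` together with the inner vertices of the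
paths `P_{γ+2}` joining `F₂` to `F₁` (pairs `(i,k)`, `k = 0` being the `F₂`-vertex itself);
the `γ` inner vertices of the paths `P_{γ+2}` joining the `i`-th vertex of `F₂` (in
breadth-first order) to the `i`-th vertex of the path `F̃₁`; the path `F̃₁` on `ω₁`
vertices; and the tree `F̃₂` together with the inner vertices of the paths `P_{γ+2}`
joining `F̃₂` to `F̃₁`. -/
abbrev WSVert (γ r a : ℕ) :=
  Fin a ⊕ ((Fin (ωr r a) × Fin (γ + 1)) ⊕ ((Fin (ωr r a) × Fin γ) ⊕
    (Fin (ωr r a) ⊕ (Fin (ωr r (ωr r a)) × Fin (γ + 1)))))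

/-- Base (directed) adjacency relation generating `W_a^{γ,*}`. -/
def WSbase (γ r a : ℕ) : WSVert γ r a → WSVert γ r a → Prop
  | .inl u, .inl v => (v : ℕ) = (u : ℕ) + 1
  | .inl u, .inr (.inl iv) => (iv.2 : ℕ) = γ ∧ heapDepth r (iv.1 : ℕ) = (u : ℕ)
  | .inr (.inl iv), .inr (.inl jw) =>
      (iv.1 = jw.1 ∧ (jw.2 : ℕ) = (iv.2 : ℕ) + 1) ∨
      ((iv.2 : ℕ) = 0 ∧ (jw.2 : ℕ) = 0 ∧ 1 ≤ (iv.1 : ℕ) ∧ (jw.1 : ℕ) = ((iv.1 : ℕ) - 1) / r)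
  | .inr (.inl iv), .inr (.inr (.inl jm)) => (iv.2 : ℕ) = 0 ∧ iv.1 = jm.1 ∧ (jm.2 : ℕ) = 0
  | .inr (.inl iv), .inr (.inr (.inr (.inl d))) => γ = 0 ∧ (iv.2 : ℕ) = 0 ∧ (iv.1 : ℕ) = (d : ℕ)
  | .inr (.inr (.inl im)), .inr (.inr (.inl jm)) => im.1 = jm.1 ∧ (jm.2 : ℕ) = (im.2 : ℕ) + 1
  | .inr (.inr (.inl im)), .inr (.inr (.inr (.inl d))) =>
      (im.2 : ℕ) + 1 = γ ∧ (im.1 : ℕ) = (d : ℕ)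
  | .inr (.inr (.inr (.inl d))), .inr (.inr (.inr (.inl e))) => (e : ℕ) = (d : ℕ) + 1
  | .inr (.inr (.inr (.inl d))), .inr (.inr (.inr (.inr jw))) =>
      (jw.2 : ℕ) = γ ∧ heapDepth r (jw.1 : ℕ) = (d : ℕ)
  | .inr (.inr (.inr (.inr iv))), .inr (.inr (.inr (.inr jw))) =>
      (iv.1 = jw.1 ∧ (jw.2 : ℕ) = (iv.2 : ℕ) + 1) ∨
      ((iv.2 : ℕ) = 0 ∧ (jw.2 : ℕ) = 0 ∧ 1 ≤ (iv.1 : ℕ) ∧ (jw.1 : ℕ) = ((iv.1 : ℕ) - 1) / r)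
  | _, _ => False

/-- The graph `W_a^{γ,*}`. -/
def WSG (γ r a : ℕ) : SimpleGraph (WSVert γ r a) := SimpleGraph.fromRel (WSbase γ r a)

/-- `Vnum γ r a = V_{γ,r}(a) = a + 2(γ+1)ω_r(a) + (γ+1)ω_r(ω_r(a))`,
the number of vertices of `W_a^{γ,*}`. -/
def Vnum (γ r a : ℕ) : ℕ := a + 2 * (γ + 1) * ωr r a + (γ + 1) * ωr r (ωr r a)

/-- `s` is (the vertex set of) an induced copy of `H` in `G`. -/
def IsInducedCopy {V W : Type} (H : SimpleGraph W) (G : SimpleGraph V) (s : Set V) : Prop :=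
  Nonempty (H ≃g G.induce s)

/-! ### The quantities `k_γ` and `f` -/

/-- `kcoef α γ = k_γ = 2(1 − α(γ+2)/(γ+1))`. -/
def kcoef (α : ℝ) (γ : ℕ) : ℝ := 2 * (1 - α * ((γ : ℝ) + 2) / ((γ : ℝ) + 1))

/-- `ff α x = f(x) = x^α · ln x`. -/
def ff (α x : ℝ) : ℝ := x ^ α * Real.log x

/-! ### The language `L_m` and EMSO satisfaction -/

/-- Relation symbols of the language `L_m`: `m` unary symbols and one binary symbol. -/
def LRel (m : ℕ) : ℕ → Type
  | 1 => Fin m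
  | 2 => Unit
  | _ => Empty

/-- The first-order language `L_m`: one binary relation symbol, `m` unary relation symbols
and no function symbols. -/
def Lang (m : ℕ) : Language where
  Functions := fun _ => Empty
  Relations := LRel m

/-- The `L_m`-structure on `Fin n` whose binary relation is adjacency in the graph `G` and
whose `i`-th unary relation is membership in `S i`. -/
def structOf {n m : ℕ} (G : SimpleGraph (Fin n)) (S : Fin m → Set (Fin n)) :
    (Lang m).Structure (Fin n) where
  funMap := fun f _ => Empty.elim f
  RelMap := fun {k} r v =>
    match k, r, v with
    | 1, i, v => v 0 ∈ S i
    | 2, _, v => G.Adj (v 0) (v 1)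
    | 0, r, _ => Empty.elim r
    | (_ + 3), r, _ => Empty.elim r

/-- `G` EMSO-satisfies the `L_m`-sentence `φ`: there are sets `S 0, …, S (m-1)` of vertices
such that the structure on `Fin n` given by adjacency in `G` and membership in the `S i`
satisfies `φ`. -/
def EMSOSat {n m : ℕ} (G : SimpleGraph (Fin n)) (φ : (Lang m).Sentence) : Prop :=
  ∃ S : Fin m → Set (Fin n),
    @FirstOrder.Language.Sentence.Realize (Lang m) (Fin n) (structOf G S) φ

/-!
First moment method. With `p = n^(-α)` and `m = ⌊κ n^α ln n⌋`, the property fails exactly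
when some `m`-set `X` dominates `G(n,p)`. For `v ∉ X` the events "`v` has a neighbour in `X`"
depend on pairwise disjoint sets of potential edges, so `X` dominates with probability
`(1 - (1-p)^m)^(n-m)`, and the expected number of dominating `m`-sets is at most
`n^m · exp(-(1-p)^m (n-m))`. Since `m p ≤ κ ln n`, for any `κ < κ' < 1 - α` eventually
`(1-p)^m ≥ n^(-κ')`, which bounds this expectation by `exp(2κ n^α ln² n - n^(1-κ'))`;
as `α < 1 - κ'`, this tends to `0`.
-/

namespace Gnp

open Finset

section ProductWeight

variable {ι ι' : Type*} [Fintype ι] [Fintype ι'] (p : ℝ)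

def bernoulliWeight (b : Bool) : ℝ := if b then p else 1 - p

def productWeight (f : ι → Bool) : ℝ := ∏ i, bernoulliWeight p (f i)

variable {p}

lemma productWeight_nonneg (hp0 : 0 ≤ p) (hp1 : p ≤ 1) (f : ι → Bool) :
    0 ≤ productWeight p f :=
  prod_nonneg fun i _ => by cases f i <;> simp [bernoulliWeight] <;> linarith

variable (p)

lemma sum_productWeight [DecidableEq ι] : ∑ f : ι → Bool, productWeight p f = 1 := by
  simp only [productWeight]
  rw [← Fintype.prod_sum fun _ => bernoulliWeight p]
  simp [bernoulliWeight]

lemma productWeight_eq [DecidableEq ι] (f : ι → Bool) :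
    productWeight p f = p ^ #{i | f i} * (1 - p) ^ (Fintype.card ι - #{i | f i}) := by
  simp only [productWeight, bernoulliWeight]
  rw [prod_ite, prod_const, prod_const, filter_not, card_sdiff_of_subset (filter_subset _ _),
    card_univ]

lemma sum_productWeight_comp_embedding [DecidableEq ι] [DecidableEq ι'] (j : ι' ↪ ι)
    (F : (ι' → Bool) → ℝ) :
    ∑ f : ι → Bool, F (f ∘ j) * productWeight p f =
      ∑ g : ι' → Bool, F g * productWeight p g := by
  classical
  let e : ι' ≃ Set.range j := Equiv.ofInjective j j.injective
  calc ∑ f : ι → Bool, F (f ∘ j) * productWeight p f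
      = ∑ q : (Set.range j → Bool) × ({i // i ∉ Set.range j} → Bool),
          F (q.1 ∘ e) * (productWeight p q.1 * productWeight p q.2) :=
        Fintype.sum_equiv (Equiv.piEquivPiSubtypeProd (· ∈ Set.range j) fun _ => Bool) _ _
          fun f => by
            rw [productWeight, ← Fintype.prod_subtype_mul_prod_subtype (· ∈ Set.range j)]
            congr
            exact Subsingleton.elim _ _
    _ = ∑ g : Set.range j → Bool, F (g ∘ e) * productWeight p g := by
        simp only [Fintype.sum_prod_type, ← mul_assoc, ← mul_sum, sum_productWeight, mul_one]
    _ = ∑ g : ι' → Bool, F g * productWeight p g :=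
        Fintype.sum_equiv (e.arrowCongr (Equiv.refl Bool)).symm _ _
          fun g => congrArg _ (e.prod_comp fun i => bernoulliWeight p (g i)).symm

lemma sum_prod_productWeight_curry [DecidableEq ι] [DecidableEq ι'] (F : (ι' → Bool) → ℝ) :
    ∑ g : ι × ι' → Bool, (∏ a, F (fun b => g (a, b))) * productWeight p g =
      (∑ h : ι' → Bool, F h * productWeight p h) ^ Fintype.card ι := by
  rw [← card_univ, ← prod_const, Fintype.prod_sum, ← (Equiv.curry ι ι' Bool).symm.sum_comp]
  refine Fintype.sum_congr _ _ fun g => ?_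
  simp [productWeight, Fintype.prod_prod_type, prod_mul_distrib]

lemma sum_exists_productWeight [DecidableEq ι] :
    ∑ f : ι → Bool, (if ∃ i, f i then 1 else 0) * productWeight p f =
      1 - (1 - p) ^ Fintype.card ι := by
  have h : ∀ f : ι → Bool, (if ∃ i, f i then 1 else 0) * productWeight p f =
      productWeight p f - if f = fun _ => false then productWeight p f else 0 := by
    intro f
    by_cases hf : f = fun _ => false
    · simp [hf]
    · have : ∃ i, f i := by simpa [funext_iff] using hf
      simp [hf, this]
  rw [Fintype.sum_congr _ _ h, sum_sub_distrib, sum_productWeight, sum_ite_eq']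
  simp [productWeight, bernoulliWeight]

end ProductWeight

section EdgeIndicator

variable {V : Type*}

open scoped Classical in
def edgeIndicatorEquiv : ({e : Sym2 V // ¬e.IsDiag} → Bool) ≃ SimpleGraph V where
  toFun f := SimpleGraph.fromEdgeSet (Subtype.val '' {e | f e})
  invFun G e := decide (e.1 ∈ G.edgeSet)
  left_inv f := by
    ext e
    simp [SimpleGraph.edgeSet_fromEdgeSet, Subtype.val_injective.mem_set_image, e.2]
  right_inv G := by
    ext u v
    simp only [SimpleGraph.fromEdgeSet_adj, Set.mem_image, Set.mem_ofPred_eq, decide_eq_true_eq]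
    exact ⟨fun ⟨⟨_, h, he⟩, _⟩ => by rwa [he] at h,
      fun h => ⟨⟨⟨s(u, v), by simpa using h.ne⟩, h, rfl⟩, h.ne⟩⟩

lemma edgeIndicatorEquiv_adj (f : {e : Sym2 V // ¬e.IsDiag} → Bool) {u v : V}
    (h : u ≠ v) : (edgeIndicatorEquiv f).Adj u v ↔ f ⟨s(u, v), by simpa using h⟩ := by
  simp [edgeIndicatorEquiv, SimpleGraph.fromEdgeSet_adj, h]

lemma card_edgeSet_edgeIndicatorEquiv [Fintype V] [DecidableEq V]
    (f : {e : Sym2 V // ¬e.IsDiag} → Bool) :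
    Nat.card (edgeIndicatorEquiv f).edgeSet = #{e | f e} := by
  rw [edgeIndicatorEquiv, Equiv.coe_fn_mk, SimpleGraph.edgeSet_fromEdgeSet]
  have hdisj : Disjoint (Subtype.val '' {e | f e}) Sym2.diagSet := by
    rw [Set.disjoint_left]
    rintro _ ⟨e, _, rfl⟩
    exact e.2
  rw [hdisj.sdiff_eq_left, Nat.card_image_of_injective Subtype.val_injective,
    Nat.card_eq_card_toFinset]
  simp

end EdgeIndicator

section Prob

variable {n : ℕ} {p : ℝ}

open scoped Classical in
lemma prob_eq_sum_productWeight (Q : SimpleGraph (Fin n) → Prop) :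
    prob n p Q =
      ∑ f : {e : Sym2 (Fin n) // ¬e.IsDiag} → Bool,
        (if Q (edgeIndicatorEquiv f) then 1 else 0) * productWeight p f := by
  rw [prob, ← edgeIndicatorEquiv.sum_comp]
  refine Fintype.sum_congr _ _ fun f => ?_
  rw [productWeight_eq, Sym2.card_subtype_not_diag, Fintype.card_fin, Nat.choose_two_right,
    edgeCt, card_edgeSet_edgeIndicatorEquiv, ite_mul, one_mul, zero_mul]

lemma prob_nonneg (hp0 : 0 ≤ p) (hp1 : p ≤ 1) (Q : SimpleGraph (Fin n) → Prop) :
    0 ≤ prob n p Q := by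
  classical
  rw [prob_eq_sum_productWeight]
  exact sum_nonneg fun f _ =>
    mul_nonneg (by split_ifs <;> norm_num) (productWeight_nonneg hp0 hp1 f)

lemma prob_add_prob_not (Q : SimpleGraph (Fin n) → Prop) :
    prob n p Q + prob n p (fun G => ¬Q G) = 1 := by
  classical
  rw [prob_eq_sum_productWeight, prob_eq_sum_productWeight, ← sum_add_distrib]
  refine (Fintype.sum_congr _ _ fun f => ?_).trans (sum_productWeight p)
  by_cases h : Q (edgeIndicatorEquiv f) <;> simp [h]

lemma prob_le_one (hp0 : 0 ≤ p) (hp1 : p ≤ 1) (Q : SimpleGraph (Fin n) → Prop) :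
    prob n p Q ≤ 1 := by
  linarith [prob_add_prob_not (p := p) Q, prob_nonneg hp0 hp1 fun G => ¬Q G]

lemma prob_exists_le_sum {ι : Type*} (hp0 : 0 ≤ p) (hp1 : p ≤ 1) (s : Finset ι)
    (Q : ι → SimpleGraph (Fin n) → Prop) :
    prob n p (fun G => ∃ i ∈ s, Q i G) ≤ ∑ i ∈ s, prob n p (Q i) := by
  classical
  simp only [prob_eq_sum_productWeight]
  rw [sum_comm]
  refine sum_le_sum fun f _ => ?_
  rw [← sum_mul]
  refine mul_le_mul_of_nonneg_right ?_ (productWeight_nonneg hp0 hp1 f)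
  split_ifs with h
  · obtain ⟨i, hi, hQ⟩ := h
    exact (if_pos hQ).symm.le.trans
      (single_le_sum (f := fun j => if Q j _ then (1 : ℝ) else 0)
        (fun j _ => by split_ifs <;> norm_num) hi)
  · exact sum_nonneg fun j _ => by split_ifs <;> norm_num

end Prob

section Domination

variable {n : ℕ}

def _root_.SimpleGraph.IsDominatingSet {V : Type*} (G : SimpleGraph V) (X : Finset V) : Prop :=
  ∀ v ∉ X, ∃ u ∈ X, G.Adj v u

def crossEdges (X : Finset (Fin n)) : ↥Xᶜ × ↥X ↪ {e : Sym2 (Fin n) // ¬e.IsDiag} where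
  toFun q := ⟨s(q.1, q.2),
    Sym2.mk_isDiag_iff.not.2 fun h => mem_compl.1 q.1.2 (by rw [h]; exact q.2.2)⟩
  inj' := by
    rintro ⟨⟨a, ha⟩, ⟨b, hb⟩⟩ ⟨⟨a', ha'⟩, ⟨b', hb'⟩⟩ h
    simp only [Subtype.mk.injEq, Sym2.eq_iff] at h
    rcases h with ⟨rfl, rfl⟩ | ⟨rfl, rfl⟩
    · rfl
    · exact absurd hb' (mem_compl.1 ha)

lemma isDominatingSet_edgeIndicatorEquiv_iff (X : Finset (Fin n))
    (f : {e : Sym2 (Fin n) // ¬e.IsDiag} → Bool) :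
    (edgeIndicatorEquiv f).IsDominatingSet X ↔
      ∀ a : ↥Xᶜ, ∃ b : ↥X, f (crossEdges X (a, b)) := by
  simp only [SimpleGraph.IsDominatingSet, Subtype.forall, Subtype.exists, mem_compl]
  refine forall₂_congr fun v hv => ?_
  have hadj {u} (hu : u ∈ X) := edgeIndicatorEquiv_adj f (ne_of_mem_of_not_mem hu hv).symm
  exact ⟨fun ⟨u, hu, h⟩ => ⟨u, hu, (hadj hu).1 h⟩,
    fun ⟨u, hu, h⟩ => ⟨u, hu, (hadj hu).2 h⟩⟩

lemma prob_isDominatingSet (p : ℝ) (X : Finset (Fin n)) :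
    prob n p (·.IsDominatingSet X) = (1 - (1 - p) ^ #X) ^ (n - #X) := by
  classical
  rw [prob_eq_sum_productWeight]
  calc _ = ∑ f : {e : Sym2 (Fin n) // ¬e.IsDiag} → Bool,
        (∏ a : ↥Xᶜ, if ∃ b : ↥X, (f ∘ crossEdges X) (a, b) then 1 else 0) *
          productWeight p f := by
        simp only [isDominatingSet_edgeIndicatorEquiv_iff, prod_boole, Function.comp_apply,
          mem_univ, true_implies]
    _ = ∑ g : ↥Xᶜ × ↥X → Bool,
        (∏ a : ↥Xᶜ, if ∃ b : ↥X, g (a, b) then 1 else 0) * productWeight p g :=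
      sum_productWeight_comp_embedding p (crossEdges X)
        fun g => ∏ a : ↥Xᶜ, if ∃ b : ↥X, g (a, b) then 1 else 0
    _ = _ := by
      rw [sum_prod_productWeight_curry p fun h : ↥X → Bool => if ∃ b, h b then 1 else 0,
        sum_exists_productWeight]
      simp

def expectedNumDominatingSets (n : ℕ) (p : ℝ) (m : ℕ) : ℝ :=
  n.choose m * (1 - (1 - p) ^ m) ^ (n - m)

variable {p : ℝ}

lemma prob_exists_isDominatingSet_le (hp0 : 0 ≤ p) (hp1 : p ≤ 1) (m : ℕ) :
    prob n p (fun G => ∃ X ∈ powersetCard m univ, G.IsDominatingSet X) ≤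
      expectedNumDominatingSets n p m := by
  refine (prob_exists_le_sum hp0 hp1 _ _).trans_eq ?_
  rw [sum_congr rfl fun X hX => by rw [prob_isDominatingSet, (mem_powersetCard_univ.1 hX)],
    sum_const, card_powersetCard, card_univ, Fintype.card_fin, nsmul_eq_mul]
  rfl

lemma one_sub_expectedNumDominatingSets_le_prob (hp0 : 0 ≤ p) (hp1 : p ≤ 1) (m : ℕ) :
    1 - expectedNumDominatingSets n p m ≤
      prob n p fun G =>
        ∀ X : Finset (Fin n), #X = m → ∃ v, v ∉ X ∧ ∀ u ∈ X, ¬G.Adj v u := by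
  have hnot : (fun G : SimpleGraph (Fin n) => ∀ X : Finset (Fin n), #X = m →
      ∃ v, v ∉ X ∧ ∀ u ∈ X, ¬G.Adj v u) =
      fun G => ¬∃ X ∈ powersetCard m univ, G.IsDominatingSet X := by
    ext G
    simp [SimpleGraph.IsDominatingSet]
  rw [hnot]
  linarith [prob_exists_isDominatingSet_le (n := n) hp0 hp1 m,
    prob_add_prob_not (n := n) (p := p) fun G => ∃ X ∈ powersetCard m univ, G.IsDominatingSet X]

end Domination

section Asymptotics

open Real

lemma exp_neg_le_one_sub_pow {p t : ℝ} {m : ℕ} (hp : p < 1) (h : m * p ≤ (1 - p) * t) :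
    exp (-t) ≤ (1 - p) ^ m := by
  have hq : 0 < 1 - p := sub_pos.2 hp
  have hlog : -(p / (1 - p)) ≤ log (1 - p) := by
    have := one_sub_inv_le_log_of_pos hq
    rwa [show 1 - (1 - p)⁻¹ = -(p / (1 - p)) by field_simp; ring] at this
  rw [← exp_log (pow_pos hq m), log_pow, exp_le_exp]
  have hmt : m * (p / (1 - p)) ≤ t := by
    rw [← mul_div_assoc, div_le_iff₀ hq]; linarith
  nlinarith [mul_le_mul_of_nonneg_left hlog (Nat.cast_nonneg m)]

lemma expectedNumDominatingSets_le_exp {n m : ℕ} {p : ℝ} (hn : 0 < n) (hp0 : 0 ≤ p)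
    (hp1 : p ≤ 1) :
    expectedNumDominatingSets n p m ≤ exp (m * (log n + 1) - (1 - p) ^ m * n) := by
  set q := (1 - p) ^ m
  have hq0 : 0 ≤ q := pow_nonneg (by linarith) m
  have hq1 : q ≤ 1 := pow_le_one₀ (by linarith) (by linarith)
  have hchoose : (n.choose m : ℝ) ≤ exp (m * log n) := by
    rw [exp_nat_mul, exp_log (by exact_mod_cast hn)]
    exact_mod_cast n.choose_le_pow m
  have hsub : (n : ℝ) ≤ (n - m : ℕ) + m := by exact_mod_cast le_tsub_add
  have hpow : (1 - q) ^ (n - m) ≤ exp (m - q * n) := by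
    calc (1 - q) ^ (n - m) ≤ exp (-q) ^ (n - m) :=
          pow_le_pow_left₀ (by linarith) (one_sub_le_exp_neg q) _
      _ = exp (-(q * (n - m : ℕ))) := by rw [← exp_nat_mul]; ring_nf
      _ ≤ exp (m - q * n) := exp_le_exp.2 (by nlinarith)
  calc expectedNumDominatingSets n p m = n.choose m * (1 - q) ^ (n - m) := rfl
    _ ≤ exp (m * log n) * exp (m - q * n) :=
      mul_le_mul hchoose hpow (pow_nonneg (by linarith) _) (exp_nonneg _)
    _ = exp (m * (log n + 1) - q * n) := by rw [← exp_add]; ring_nf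

lemma tendsto_mul_rpow_mul_log_sq_sub_rpow_atBot (C : ℝ) {a b : ℝ} (hb : 0 < b) (hab : a < b) :
    Tendsto (fun x => C * x ^ a * log x ^ 2 - x ^ b) atTop atBot := by
  have hlittle : (fun x => C * x ^ a * log x ^ 2) =o[atTop] fun x => x ^ b := by
    have h := ((isLittleO_log_rpow_rpow_atTop 2 (sub_pos.2 hab)).const_mul_left C).mul_isBigO
      (Asymptotics.isBigO_refl (fun x : ℝ => x ^ a) atTop)
    refine h.congr' ?_ ?_
    · filter_upwards with x
      rw [Real.rpow_two]; ring
    · filter_upwards [eventually_gt_atTop 0] with x hx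
      rw [← rpow_add hx]; ring_nf
  refine tendsto_atBot_mono' _ ?_ (tendsto_neg_atTop_atBot.comp
    ((tendsto_rpow_atTop hb).const_mul_atTop (by norm_num : (0 : ℝ) < 1 / 2)))
  filter_upwards [hlittle.bound (by norm_num : (0 : ℝ) < 1 / 2), eventually_gt_atTop 0]
    with x hx hx0
  rw [Real.norm_of_nonneg (rpow_nonneg hx0.le b), Real.norm_eq_abs] at hx
  simp only [Function.comp_apply]
  linarith [le_abs_self (C * x ^ a * log x ^ 2)]

lemma expectedNumDominatingSets_nonneg {n m : ℕ} {p : ℝ} (hp0 : 0 ≤ p) (hp1 : p ≤ 1) :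
    0 ≤ expectedNumDominatingSets n p m :=
  mul_nonneg (Nat.cast_nonneg _)
    (pow_nonneg (sub_nonneg.2 (pow_le_one₀ (by linarith) (by linarith))) _)

lemma expectedNumDominatingSets_le {n : ℕ} {α κ κ' : ℝ} (hn : 3 ≤ n) (hα : 0 < α)
    (hκ : 0 ≤ κ) (hκ' : κ ≤ (1 - (n : ℝ) ^ (-α)) * κ') :
    expectedNumDominatingSets n ((n : ℝ) ^ (-α)) ⌊κ * (n : ℝ) ^ α * log n⌋₊ ≤
      exp (2 * κ * (n : ℝ) ^ α * log n ^ 2 - (n : ℝ) ^ (1 - κ')) := by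
  set p := (n : ℝ) ^ (-α)
  set m := ⌊κ * (n : ℝ) ^ α * log n⌋₊
  have hn0 : (0 : ℝ) < n := by positivity
  have hlog : 1 ≤ log n := by
    rw [le_log_iff_exp_le hn0]
    exact (exp_one_lt_d9.trans (by norm_num)).le.trans (by exact_mod_cast hn : (3 : ℝ) ≤ n)
  have hp0 : 0 ≤ p := rpow_nonneg hn0.le _
  have hp1 : p < 1 := rpow_lt_one_of_one_lt_of_neg (by norm_cast; omega) (neg_lt_zero.2 hα)
  have hm : (m : ℝ) ≤ κ * (n : ℝ) ^ α * log n := Nat.floor_le (by positivity)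
  have hmp : m * p ≤ (1 - p) * (κ' * log n) := by
    have : (n : ℝ) ^ α * p = 1 := by rw [← rpow_add hn0]; simp
    calc m * p ≤ κ * (n : ℝ) ^ α * log n * p := mul_le_mul_of_nonneg_right hm hp0
      _ = κ * log n := by linear_combination κ * log n * this
      _ ≤ (1 - p) * κ' * log n := mul_le_mul_of_nonneg_right hκ' (by linarith)
      _ = (1 - p) * (κ' * log n) := by ring
  have hq : (n : ℝ) ^ (1 - κ') ≤ (1 - p) ^ m * n := by
    have := mul_le_mul_of_nonneg_right (exp_neg_le_one_sub_pow hp1 hmp) hn0.le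
    rwa [rpow_def_of_pos hn0, show log n * (1 - κ') = -(κ' * log n) + log n by ring, exp_add,
      exp_log hn0]
  refine (expectedNumDominatingSets_le_exp (by omega) hp0 hp1.le).trans (exp_le_exp.2 ?_)
  nlinarith [mul_le_mul_of_nonneg_right hm (by linarith : (0 : ℝ) ≤ log n + 1)]

lemma tendsto_expectedNumDominatingSets {α κ : ℝ} (hα : 0 < α) (hκ0 : 0 < κ)
    (hκ : κ < 1 - α) :
    Tendsto (fun n : ℕ => expectedNumDominatingSets n ((n : ℝ) ^ (-α))
      ⌊κ * (n : ℝ) ^ α * log n⌋₊) atTop (nhds 0) := by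
  set κ' := (κ + (1 - α)) / 2 with hκ'
  have hp : Tendsto (fun n : ℕ => (n : ℝ) ^ (-α)) atTop (nhds 0) :=
    (tendsto_rpow_neg_atTop hα).comp tendsto_natCast_atTop_atTop
  have hsmall : ∀ᶠ n : ℕ in atTop, κ < (1 - (n : ℝ) ^ (-α)) * κ' :=
    ((tendsto_const_nhds.sub hp).mul_const κ').eventually_const_lt (by linarith)
  have hbound := tendsto_exp_atBot.comp ((tendsto_mul_rpow_mul_log_sq_sub_rpow_atBot (2 * κ)
    (by linarith) (by linarith : α < 1 - κ')).comp tendsto_natCast_atTop_atTop)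
  refine squeeze_zero' ?_ ?_ hbound
  · filter_upwards [eventually_ge_atTop 1] with n hn
    exact expectedNumDominatingSets_nonneg (rpow_nonneg n.cast_nonneg _)
      (rpow_le_one_of_one_le_of_nonpos (by exact_mod_cast hn) (by linarith))
  · filter_upwards [hsmall, eventually_ge_atTop 3] with n hn hn3
    exact expectedNumDominatingSets_le hn3 hα hκ0.le hn.le

end Asymptotics

end Gnp

theorem stmt9_general (α : ℝ) (hα0 : 0 < α) (κ : ℝ) (hκ0 : 0 < κ) (hκ : κ < 1 - α) :
    Tendsto (fun n : ℕ =>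
        prob n ((n : ℝ) ^ (-α)) (fun G =>
          ∀ X : Finset (Fin n), X.card = ⌊κ * (n : ℝ) ^ α * Real.log n⌋₊ →
            ∃ v, v ∉ X ∧ ∀ u ∈ X, ¬ G.Adj v u))
      atTop (nhds 1) := by
  have hp : ∀ᶠ n : ℕ in atTop, 0 ≤ (n : ℝ) ^ (-α) ∧ (n : ℝ) ^ (-α) ≤ 1 := by
    filter_upwards [eventually_ge_atTop 1] with n hn
    exact ⟨Real.rpow_nonneg n.cast_nonneg _,
      Real.rpow_le_one_of_one_le_of_nonpos (by exact_mod_cast hn) (by linarith)⟩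
  have hlower := (tendsto_const_nhds (x := (1 : ℝ))).sub
    (Gnp.tendsto_expectedNumDominatingSets hα0 hκ0 hκ)
  rw [sub_zero] at hlower
  refine tendsto_of_tendsto_of_tendsto_of_le_of_le' hlower tendsto_const_nhds ?_ ?_
  · filter_upwards [hp] with n hpn
    exact Gnp.one_sub_expectedNumDominatingSets_le_prob hpn.1 hpn.2 _
  · filter_upwards [hp] with n hpn
    exact Gnp.prob_le_one hpn.1 hpn.2 _

/-- Let α ∈ (0,1) and 0 < κ < 1 − α. Then a.a.s., for every set X of exactly
⌊κ·n^α·ln n⌋ vertices of G(n, n^{−α}), there is a vertex outside X having no neighbor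
in X. -/
theorem stmt9 (α : ℝ) (hα0 : 0 < α) (hα1 : α < 1) (κ : ℝ) (hκ0 : 0 < κ) (hκ : κ < 1 - α) :
    Tendsto (fun n : ℕ =>
        prob n ((n : ℝ) ^ (-α)) (fun G =>
          ∀ X : Finset (Fin n), X.card = ⌊κ * (n : ℝ) ^ α * Real.log n⌋₊ →
            ∃ v, v ∉ X ∧ ∀ u ∈ X, ¬ G.Adj v u))
      atTop (nhds 1) :=
  stmt9_general α hα0 κ hκ0 hκ
end
end

section
/- For all integers r ≥ 2, a ≥ 1, γ ≥ 0 and every set Υ of ℓ vertices of W_a^{γ,*}, the subgraph of W_a^{γ,*} induced on Υ has at most (γ+2)·ℓ/(γ+1) edges. -/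
open Filter FirstOrder

noncomputable section

/-- `wt γ r a v u` : weight that vertex `v` receives from the (potential) edge `{v,u}`. -/
def wt (γ r a : ℕ) : WSVert γ r a → WSVert γ r a → ℕ
  | .inl u, .inl v => if (u : ℕ) = (v : ℕ) + 1 then γ + 1 else 0
  | .inr (.inl ik), .inl u =>
      if (ik.2 : ℕ) = γ ∧ heapDepth r (ik.1 : ℕ) = (u : ℕ) then γ + 1 else 0
  | .inr (.inl ik), .inr (.inl jm) =>
      (if (ik.2 : ℕ) = 0 ∧ (jm.2 : ℕ) = 0 ∧ 1 ≤ (ik.1 : ℕ) ∧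
          (jm.1 : ℕ) = ((ik.1 : ℕ) - 1) / r then γ + 1 else 0)
      + (if (jm.1 : ℕ) = (ik.1 : ℕ) ∧ (ik.2 : ℕ) = (jm.2 : ℕ) + 1
          then γ + 1 - (ik.2 : ℕ) else 0)
      + (if (jm.1 : ℕ) = (ik.1 : ℕ) ∧ (jm.2 : ℕ) = (ik.2 : ℕ) + 1
          then (ik.2 : ℕ) + 1 else 0)
  | .inr (.inr (.inl im)), .inr (.inl jk) =>
      if (im.2 : ℕ) = 0 ∧ (jk.1 : ℕ) = (im.1 : ℕ) ∧ (jk.2 : ℕ) = 0 then γ + 1 else 0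
  | .inr (.inr (.inl im)), .inr (.inr (.inl jm)) =>
      (if (jm.1 : ℕ) = (im.1 : ℕ) ∧ (im.2 : ℕ) = (jm.2 : ℕ) + 1
          then γ + 1 - (im.2 : ℕ) else 0)
      + (if (jm.1 : ℕ) = (im.1 : ℕ) ∧ (jm.2 : ℕ) = (im.2 : ℕ) + 1
          then (im.2 : ℕ) + 1 else 0)
  | .inr (.inr (.inl im)), .inr (.inr (.inr (.inl d))) =>
      if (im.2 : ℕ) + 1 = γ ∧ (im.1 : ℕ) = (d : ℕ) then (im.2 : ℕ) + 1 else 0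
  | .inr (.inr (.inr (.inl d))), .inr (.inl ik) =>
      if γ = 0 ∧ (ik.2 : ℕ) = 0 ∧ (ik.1 : ℕ) = (d : ℕ) then 1 else 0
  | .inr (.inr (.inr (.inl d))), .inr (.inr (.inl im)) =>
      if (im.2 : ℕ) + 1 = γ ∧ (im.1 : ℕ) = (d : ℕ) then 1 else 0
  | .inr (.inr (.inr (.inl d))), .inr (.inr (.inr (.inl e))) =>
      if (d : ℕ) = (e : ℕ) + 1 then γ + 1 else 0
  | .inr (.inr (.inr (.inr jk))), .inr (.inr (.inr (.inl d))) =>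
      if (jk.2 : ℕ) = γ ∧ heapDepth r (jk.1 : ℕ) = (d : ℕ) then γ + 1 else 0
  | .inr (.inr (.inr (.inr ik))), .inr (.inr (.inr (.inr jm))) =>
      (if (ik.2 : ℕ) = 0 ∧ (jm.2 : ℕ) = 0 ∧ 1 ≤ (ik.1 : ℕ) ∧
          (jm.1 : ℕ) = ((ik.1 : ℕ) - 1) / r then γ + 1 else 0)
      + (if (jm.1 : ℕ) = (ik.1 : ℕ) ∧ (ik.2 : ℕ) = (jm.2 : ℕ) + 1
          then γ + 1 - (ik.2 : ℕ) else 0)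
      + (if (jm.1 : ℕ) = (ik.1 : ℕ) ∧ (jm.2 : ℕ) = (ik.2 : ℕ) + 1
          then (ik.2 : ℕ) + 1 else 0)
  | _, _ => 0

set_option maxHeartbeats 2000000 in
lemma wt_spec (γ r a : ℕ) (u v : WSVert γ r a) (h : WSbase γ r a u v) :
    γ + 1 ≤ wt γ r a u v + wt γ r a v u := by
  rcases u with u | ik | im | d | jk <;> rcases v with u' | ik' | im' | d' | jk' <;>
    simp only [WSbase, Fin.ext_iff] at h <;>
    simp only [wt] <;>
    first
      | exact h.elim
      | (first
          | (have h1 := ik.2.isLt; have h2 := ik'.2.isLt)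
          | (have h1 := im.2.isLt; have h2 := im'.2.isLt)
          | (have h1 := jk.2.isLt; have h2 := jk'.2.isLt)
          | (have h1 := ik.2.isLt)
          | (have h1 := im.2.isLt)
          | (have h1 := jk.2.isLt)
          | (have h1 := ik'.2.isLt)
          | (have h1 := im'.2.isLt)
          | (have h1 := jk'.2.isLt)
          | skip) <;>
        split_ifs <;> omega

lemma sum_ite_le_ite {α β : Type*} [Fintype α] [DecidableEq β] {P : α → Prop} [DecidablePred P]
    (g : α → β) (hg : Function.Injective g) (t : β) (h : ∀ i, P i → g i = t)
    (c : ℕ) {Q : Prop} [Decidable Q] (hQ : ∀ i, P i → Q) :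
    (∑ i, if P i then c else 0) ≤ if Q then c else 0 := by
  by_cases hq : Q
  · rw [if_pos hq]
    have hcard : (Finset.univ.filter fun i => P i).card ≤ 1 := by
      apply Finset.card_le_one.mpr
      intro i hi j hj
      rw [Finset.mem_filter] at hi hj
      exact hg ((h i hi.2).trans (h j hj.2).symm)
    calc (∑ i, if P i then c else 0) = ∑ i ∈ Finset.univ.filter fun i => P i, c := by
          rw [Finset.sum_filter]
      _ = (Finset.univ.filter fun i => P i).card * c := by
          rw [Finset.sum_const, smul_eq_mul]
      _ ≤ 1 * c := Nat.mul_le_mul_right c hcard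
      _ = c := one_mul c
  · rw [if_neg hq]
    apply le_of_eq
    exact Finset.sum_eq_zero fun i _ => if_neg fun hp => hq (hQ i hp)

lemma sum_ite_le_const {α β : Type*} [Fintype α] [DecidableEq β] {P : α → Prop} [DecidablePred P]
    (g : α → β) (hg : Function.Injective g) (t : β) (h : ∀ i, P i → g i = t)
    (c : ℕ) : (∑ i, if P i then c else 0) ≤ c := by
  have := sum_ite_le_ite g hg t h c (Q := True) (fun _ _ => trivial)
  simpa using this

lemma fin_val_inj {n m : ℕ} :
    Function.Injective (fun p : Fin n × Fin m => ((p.1 : ℕ), (p.2 : ℕ))) := by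
  intro p q h
  simp only [Prod.mk.injEq] at h
  exact Prod.ext (Fin.ext h.1) (Fin.ext h.2)

set_option maxHeartbeats 1000000 in
lemma load_le (γ r a : ℕ) (v : WSVert γ r a) : ∑ u, wt γ r a v u ≤ γ + 2 := by
  rcases v with u | ik | im | d | jk
  all_goals simp only [Fintype.sum_sum_type, wt, Finset.sum_add_distrib,
    Finset.sum_const_zero, add_zero, zero_add]
  · -- A
    refine le_trans (sum_ite_le_const (fun x : Fin a => (x : ℕ) + 1)
      (fun x y h => Fin.ext (Nat.succ_injective h)) (u : ℕ) (fun i hi => hi.symm) _) (by omega)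
  · -- B
    have hk := ik.2.isLt
    have hA : (∑ x : Fin a, if (ik.2 : ℕ) = γ ∧ heapDepth r (ik.1 : ℕ) = (x : ℕ)
        then γ + 1 else 0) ≤ if (ik.2 : ℕ) = γ then γ + 1 else 0 :=
      sum_ite_le_ite (fun x : Fin a => (x : ℕ)) (fun x y h => Fin.ext h)
        (heapDepth r (ik.1 : ℕ)) (fun i hi => hi.2.symm) _ (fun i hi => hi.1)
    have hp : (∑ x : Fin (ωr r a) × Fin (γ + 1), if (ik.2 : ℕ) = 0 ∧ (x.2 : ℕ) = 0 ∧
          1 ≤ (ik.1 : ℕ) ∧ (x.1 : ℕ) = ((ik.1 : ℕ) - 1) / r then γ + 1 else 0)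
        ≤ if (ik.2 : ℕ) = 0 then γ + 1 else 0 :=
      sum_ite_le_ite _ fin_val_inj (((ik.1 : ℕ) - 1) / r, 0)
        (fun i hi => by simp only [Prod.mk.injEq]; omega) _ (fun i hi => hi.1)
    have hd : (∑ x : Fin (ωr r a) × Fin (γ + 1), if (x.1 : ℕ) = (ik.1 : ℕ) ∧
          (ik.2 : ℕ) = (x.2 : ℕ) + 1 then γ + 1 - (ik.2 : ℕ) else 0)
        ≤ if 1 ≤ (ik.2 : ℕ) then γ + 1 - (ik.2 : ℕ) else 0 :=
      sum_ite_le_ite _ fin_val_inj ((ik.1 : ℕ), (ik.2 : ℕ) - 1)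
        (fun i hi => by simp only [Prod.mk.injEq]; omega) _ (fun i hi => by omega)
    have hu : (∑ x : Fin (ωr r a) × Fin (γ + 1), if (x.1 : ℕ) = (ik.1 : ℕ) ∧
          (x.2 : ℕ) = (ik.2 : ℕ) + 1 then (ik.2 : ℕ) + 1 else 0)
        ≤ if (ik.2 : ℕ) + 1 ≤ γ then (ik.2 : ℕ) + 1 else 0 :=
      sum_ite_le_ite _ fin_val_inj ((ik.1 : ℕ), (ik.2 : ℕ) + 1)
        (fun i hi => by simp only [Prod.mk.injEq]; omega) _
        (fun i hi => by have := i.2.isLt; omega)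
    refine le_trans (add_le_add hA (add_le_add (add_le_add hp hd) hu)) ?_
    split_ifs <;> omega
  · -- C
    have hm := im.2.isLt
    have hB : (∑ x : Fin (ωr r a) × Fin (γ + 1), if (im.2 : ℕ) = 0 ∧
          (x.1 : ℕ) = (im.1 : ℕ) ∧ (x.2 : ℕ) = 0 then γ + 1 else 0)
        ≤ if (im.2 : ℕ) = 0 then γ + 1 else 0 :=
      sum_ite_le_ite _ fin_val_inj ((im.1 : ℕ), 0)
        (fun i hi => by simp only [Prod.mk.injEq]; omega) _ (fun i hi => hi.1)
    have hd : (∑ x : Fin (ωr r a) × Fin γ, if (x.1 : ℕ) = (im.1 : ℕ) ∧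
          (im.2 : ℕ) = (x.2 : ℕ) + 1 then γ + 1 - (im.2 : ℕ) else 0)
        ≤ if 1 ≤ (im.2 : ℕ) then γ + 1 - (im.2 : ℕ) else 0 :=
      sum_ite_le_ite _ fin_val_inj ((im.1 : ℕ), (im.2 : ℕ) - 1)
        (fun i hi => by simp only [Prod.mk.injEq]; omega) _ (fun i hi => by omega)
    have hu : (∑ x : Fin (ωr r a) × Fin γ, if (x.1 : ℕ) = (im.1 : ℕ) ∧
          (x.2 : ℕ) = (im.2 : ℕ) + 1 then (im.2 : ℕ) + 1 else 0)
        ≤ if (im.2 : ℕ) + 2 ≤ γ then (im.2 : ℕ) + 1 else 0 :=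
      sum_ite_le_ite _ fin_val_inj ((im.1 : ℕ), (im.2 : ℕ) + 1)
        (fun i hi => by simp only [Prod.mk.injEq]; omega) _
        (fun i hi => by have := i.2.isLt; omega)
    have hD : (∑ x : Fin (ωr r a), if (im.2 : ℕ) + 1 = γ ∧ (im.1 : ℕ) = (x : ℕ)
          then (im.2 : ℕ) + 1 else 0)
        ≤ if (im.2 : ℕ) + 1 = γ then (im.2 : ℕ) + 1 else 0 :=
      sum_ite_le_ite (fun x : Fin (ωr r a) => (x : ℕ)) (fun x y h => Fin.ext h)
        ((im.1 : ℕ)) (fun i hi => hi.2.symm) _ (fun i hi => hi.1)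
    refine le_trans (add_le_add hB (add_le_add (add_le_add hd hu) hD)) ?_
    split_ifs <;> omega
  · -- D
    have hB : (∑ x : Fin (ωr r a) × Fin (γ + 1), if γ = 0 ∧ (x.2 : ℕ) = 0 ∧
          (x.1 : ℕ) = (d : ℕ) then 1 else 0) ≤ if γ = 0 then 1 else 0 :=
      sum_ite_le_ite _ fin_val_inj ((d : ℕ), 0)
        (fun i hi => by simp only [Prod.mk.injEq]; omega) _ (fun i hi => hi.1)
    have hC : (∑ x : Fin (ωr r a) × Fin γ, if (x.2 : ℕ) + 1 = γ ∧
          (x.1 : ℕ) = (d : ℕ) then 1 else 0) ≤ if 1 ≤ γ then 1 else 0 :=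
      sum_ite_le_ite _ fin_val_inj ((d : ℕ), γ - 1)
        (fun i hi => by simp only [Prod.mk.injEq]; omega) _ (fun i hi => by omega)
    have hD : (∑ x : Fin (ωr r a), if (d : ℕ) = (x : ℕ) + 1 then γ + 1 else 0) ≤ γ + 1 :=
      sum_ite_le_const (fun x : Fin (ωr r a) => (x : ℕ) + 1)
        (fun x y h => Fin.ext (Nat.succ_injective h)) (d : ℕ) (fun i hi => hi.symm) _
    refine le_trans (add_le_add hB (add_le_add hC hD)) ?_
    split_ifs <;> omega
  · -- E
    have hk := jk.2.isLt
    have hA : (∑ x : Fin (ωr r a), if (jk.2 : ℕ) = γ ∧ heapDepth r (jk.1 : ℕ) = (x : ℕ)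
        then γ + 1 else 0) ≤ if (jk.2 : ℕ) = γ then γ + 1 else 0 :=
      sum_ite_le_ite (fun x : Fin (ωr r a) => (x : ℕ)) (fun x y h => Fin.ext h)
        (heapDepth r (jk.1 : ℕ)) (fun i hi => hi.2.symm) _ (fun i hi => hi.1)
    have hp : (∑ x : Fin (ωr r (ωr r a)) × Fin (γ + 1), if (jk.2 : ℕ) = 0 ∧ (x.2 : ℕ) = 0 ∧
          1 ≤ (jk.1 : ℕ) ∧ (x.1 : ℕ) = ((jk.1 : ℕ) - 1) / r then γ + 1 else 0)
        ≤ if (jk.2 : ℕ) = 0 then γ + 1 else 0 :=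
      sum_ite_le_ite _ fin_val_inj (((jk.1 : ℕ) - 1) / r, 0)
        (fun i hi => by simp only [Prod.mk.injEq]; omega) _ (fun i hi => hi.1)
    have hd : (∑ x : Fin (ωr r (ωr r a)) × Fin (γ + 1), if (x.1 : ℕ) = (jk.1 : ℕ) ∧
          (jk.2 : ℕ) = (x.2 : ℕ) + 1 then γ + 1 - (jk.2 : ℕ) else 0)
        ≤ if 1 ≤ (jk.2 : ℕ) then γ + 1 - (jk.2 : ℕ) else 0 :=
      sum_ite_le_ite _ fin_val_inj ((jk.1 : ℕ), (jk.2 : ℕ) - 1)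
        (fun i hi => by simp only [Prod.mk.injEq]; omega) _ (fun i hi => by omega)
    have hu : (∑ x : Fin (ωr r (ωr r a)) × Fin (γ + 1), if (x.1 : ℕ) = (jk.1 : ℕ) ∧
          (x.2 : ℕ) = (jk.2 : ℕ) + 1 then (jk.2 : ℕ) + 1 else 0)
        ≤ if (jk.2 : ℕ) + 1 ≤ γ then (jk.2 : ℕ) + 1 else 0 :=
      sum_ite_le_ite _ fin_val_inj ((jk.1 : ℕ), (jk.2 : ℕ) + 1)
        (fun i hi => by simp only [Prod.mk.injEq]; omega) _
        (fun i hi => by have := i.2.isLt; omega)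
    refine le_trans (add_le_add hA (add_le_add (add_le_add hp hd) hu)) ?_
    split_ifs <;> omega

/-- For all r ≥ 2, a ≥ 1, γ ≥ 0 and every set Υ of ℓ vertices of
W_a^{γ,*}, the subgraph of W_a^{γ,*} induced on Υ has at most (γ+2)·ℓ/(γ+1) edges. -/
theorem stmt14 (r a γ ℓ : ℕ) (hr : 2 ≤ r) (ha : 1 ≤ a)
    (Υ : Finset (WSVert γ r a)) (hΥ : Υ.card = ℓ) :
    (Nat.card ((WSG γ r a).induce (↑Υ : Set (WSVert γ r a))).edgeSet : ℝ) ≤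
      ((γ : ℝ) + 2) * (ℓ : ℝ) / ((γ : ℝ) + 1) := by
  classical
  set H := (WSG γ r a).induce (↑Υ : Set (WSVert γ r a)) with hH
  have hcardV : Fintype.card (↑Υ : Set (WSVert γ r a)) = ℓ := by
    rw [← hΥ]; exact Fintype.card_coe Υ
  have hsub : ∀ (f : WSVert γ r a → ℕ),
      (∑ y : (↑Υ : Set (WSVert γ r a)), f y.val) ≤ ∑ y, f y := by
    intro f
    have himg : ∑ y ∈ Finset.univ.image (fun y : (↑Υ : Set (WSVert γ r a)) => y.val), f y
        = ∑ y : (↑Υ : Set (WSVert γ r a)), f y.val :=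
      Finset.sum_image (fun x _ y _ h => Subtype.ext h)
    rw [← himg]
    exact Finset.sum_le_sum_of_subset (Finset.subset_univ _)
  have key : (γ + 1) * (2 * H.edgeFinset.card) ≤ (γ + 2) * (2 * ℓ) := by
    rw [SimpleGraph.two_mul_card_edgeFinset]
    have step1 : (γ + 1) * (Finset.univ.filter fun p :
          (↑Υ : Set (WSVert γ r a)) × (↑Υ : Set (WSVert γ r a)) => H.Adj p.1 p.2).card
        ≤ ∑ p ∈ (Finset.univ.filter fun p :
          (↑Υ : Set (WSVert γ r a)) × (↑Υ : Set (WSVert γ r a)) => H.Adj p.1 p.2),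
          (wt γ r a p.1.val p.2.val + wt γ r a p.2.val p.1.val) := by
      rw [mul_comm]
      rw [← smul_eq_mul]
      apply Finset.card_nsmul_le_sum
      intro p hp
      rw [Finset.mem_filter] at hp
      have hadj : (WSG γ r a).Adj p.1.val p.2.val := hp.2
      rw [WSG, SimpleGraph.fromRel_adj] at hadj
      rcases hadj.2 with h | h
      · exact wt_spec γ r a _ _ h
      · have := wt_spec γ r a p.2.val p.1.val h; omega
    refine le_trans step1 ?_
    refine le_trans (Finset.sum_le_sum_of_subset (Finset.subset_univ _)) ?_
    rw [Finset.sum_add_distrib]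
    have h1 : ∑ p : (↑Υ : Set (WSVert γ r a)) × (↑Υ : Set (WSVert γ r a)),
        wt γ r a p.1.val p.2.val ≤ (γ + 2) * ℓ := by
      rw [Fintype.sum_prod_type]
      calc ∑ x : (↑Υ : Set (WSVert γ r a)), ∑ y : (↑Υ : Set (WSVert γ r a)),
            wt γ r a x.val y.val
          ≤ ∑ x : (↑Υ : Set (WSVert γ r a)), (γ + 2) := by
            apply Finset.sum_le_sum
            intro x _
            exact le_trans (hsub _) (load_le γ r a x.val)
        _ = (γ + 2) * ℓ := by
            rw [Finset.sum_const, smul_eq_mul, Finset.card_univ, hcardV, mul_comm]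
    have h2 : ∑ p : (↑Υ : Set (WSVert γ r a)) × (↑Υ : Set (WSVert γ r a)),
        wt γ r a p.2.val p.1.val ≤ (γ + 2) * ℓ := by
      rw [Fintype.sum_prod_type]
      rw [Finset.sum_comm]
      calc ∑ y : (↑Υ : Set (WSVert γ r a)), ∑ x : (↑Υ : Set (WSVert γ r a)),
            wt γ r a y.val x.val
          ≤ ∑ y : (↑Υ : Set (WSVert γ r a)), (γ + 2) := by
            apply Finset.sum_le_sum
            intro y _
            exact le_trans (hsub _) (load_le γ r a y.val)
        _ = (γ + 2) * ℓ := by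
            rw [Finset.sum_const, smul_eq_mul, Finset.card_univ, hcardV, mul_comm]
    calc _ ≤ (γ + 2) * ℓ + (γ + 2) * ℓ := add_le_add h1 h2
      _ = (γ + 2) * (2 * ℓ) := by ring
  have key2 : (γ + 1) * H.edgeFinset.card ≤ (γ + 2) * ℓ := by
    have h2 : 2 * ((γ + 1) * H.edgeFinset.card) ≤ 2 * ((γ + 2) * ℓ) := by
      calc 2 * ((γ + 1) * H.edgeFinset.card) = (γ + 1) * (2 * H.edgeFinset.card) := by ring
        _ ≤ (γ + 2) * (2 * ℓ) := key
        _ = 2 * ((γ + 2) * ℓ) := by ring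
    exact Nat.le_of_mul_le_mul_left h2 (by norm_num)
  have hE : Nat.card H.edgeSet = H.edgeFinset.card := by
    rw [Nat.card_eq_fintype_card, SimpleGraph.edgeFinset_card]
  rw [hE]
  have hpos : (0 : ℝ) < (γ : ℝ) + 1 := by positivity
  rw [le_div_iff₀ hpos]
  have hc : ((γ : ℝ) + 1) * (H.edgeFinset.card : ℝ) ≤ ((γ : ℝ) + 2) * (ℓ : ℝ) := by
    exact_mod_cast key2
  linarith
end
end

section
/- For all integers a ≥ 1 and γ ≥ 0, the graph W_a^γ has exactly a + (γ+1)(4^a−1)/3 vertices and exactly a + (γ+2)(4^a−1)/3 − 2 edges. -/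
open Filter FirstOrder

noncomputable section

/-! ### Auxiliary lemmas for stmt15 -/

lemma three_mul_ωr (a : ℕ) : 3 * ωr 4 a = 4 ^ a - 1 := by
  have hdvd : 3 ∣ 4 ^ a - 1 := by
    have h : (4 : ℕ) ^ a ≡ 1 ^ a [MOD 3] := Nat.ModEq.pow a (by decide)
    simpa using (Nat.modEq_iff_dvd' (Nat.one_le_pow _ _ (by norm_num))).mp
      (by simpa using h.symm)
  have : ωr 4 a = (4 ^ a - 1) / 3 := by simp [ωr]
  rw [this, Nat.mul_div_cancel' hdvd]

lemma ωr_succ4 (a : ℕ) : ωr 4 (a + 1) = 4 * ωr 4 a + 1 := by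
  have h1 := three_mul_ωr a
  have h2 := three_mul_ωr (a + 1)
  have h3 : (4 : ℕ) ^ (a + 1) = 4 * 4 ^ a := by ring
  have h4 : 1 ≤ (4 : ℕ) ^ a := Nat.one_le_pow _ _ (by norm_num)
  omega

lemma ωr4_pos (a : ℕ) (ha : 1 ≤ a) : 1 ≤ ωr 4 a := by
  have h1 := three_mul_ωr a
  have h4 : (4 : ℕ) ^ 1 ≤ 4 ^ a := Nat.pow_le_pow_right (by norm_num) ha
  simp at h4; omega

lemma heapDepth_lt (a : ℕ) : ∀ j, j < ωr 4 a → heapDepth 4 j < a := by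
  induction a with
  | zero => intro j hj; simp [ωr] at hj
  | succ a ih =>
    intro j hj
    match j with
    | 0 => simp [heapDepth]
    | j + 1 =>
      rw [heapDepth]
      have hs := ωr_succ4 a
      have : j / 4 < ωr 4 a := by omega
      exact Nat.succ_lt_succ (ih _ this)

lemma wbase_asymm {γ a : ℕ} (x y : WVert γ a) (h : Wbase γ a x y)
    (h' : Wbase γ a y x) : False := by
  rcases x with u | iv <;> rcases y with v | jw <;>
    simp only [Wbase] at h h'
  · omega
  · rcases h with ⟨h1, h2⟩ | ⟨h1, h2, h3, h4⟩ <;>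
      rcases h' with ⟨h1', h2'⟩ | ⟨h1', h2', h3', h4'⟩ <;> omega

/-- The indexing type for the edges of `W_a^γ`. -/
abbrev Tty (γ a : ℕ) :=
  Fin (a - 1) ⊕ (Fin (ωr 4 a) ⊕ ((Fin (ωr 4 a) × Fin γ) ⊕ Fin (ωr 4 a - 1)))

/-- The pair of endpoints of each edge of `W_a^γ`. -/
def gmap (γ a : ℕ) : Tty γ a → WVert γ a × WVert γ a
  | .inl u => (.inl ⟨u.1, by have := u.2; omega⟩, .inl ⟨u.1 + 1, by have := u.2; omega⟩)
  | .inr (.inl i) =>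
      (.inl ⟨heapDepth 4 i.1, heapDepth_lt a i.1 i.2⟩, .inr (i, ⟨γ, Nat.lt_succ_self γ⟩))
  | .inr (.inr (.inl ik)) =>
      (.inr (ik.1, ⟨ik.2.1, by have := ik.2.2; omega⟩),
       .inr (ik.1, ⟨ik.2.1 + 1, by have := ik.2.2; omega⟩))
  | .inr (.inr (.inr j)) =>
      (.inr (⟨j.1 + 1, by have := j.2; omega⟩, ⟨0, Nat.succ_pos γ⟩),
       .inr (⟨j.1 / 4, by have := j.2; have := Nat.div_le_self j.1 4; omega⟩,
             ⟨0, Nat.succ_pos γ⟩))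

lemma gmap_wbase (γ a : ℕ) (t : Tty γ a) :
    Wbase γ a (gmap γ a t).1 (gmap γ a t).2 := by
  rcases t with u | i | ik | j <;> simp [gmap, Wbase]

lemma gmap_inj (γ a : ℕ) : Function.Injective (gmap γ a) := by
  rintro (u | i | ik | j) (u' | i' | ik' | j') h <;>
    simp only [gmap, Prod.mk.injEq, Sum.inl.injEq, Sum.inr.injEq, Prod.ext_iff,
      Fin.mk.injEq, Fin.ext_iff, reduceCtorEq, and_false, false_and,
      and_true, true_and] at h ⊢ <;> omega

/-- The edges themselves. -/
def fmap (γ a : ℕ) (t : Tty γ a) : Sym2 (WVert γ a) :=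
  s((gmap γ a t).1, (gmap γ a t).2)

lemma gmap_ne (γ a : ℕ) (t : Tty γ a) : (gmap γ a t).1 ≠ (gmap γ a t).2 := by
  intro h
  exact wbase_asymm _ _ (gmap_wbase γ a t) (h ▸ gmap_wbase γ a t)

lemma fmap_inj (γ a : ℕ) : Function.Injective (fmap γ a) := by
  intro t t' h
  rw [fmap, fmap, Sym2.eq_iff] at h
  rcases h with ⟨h1, h2⟩ | ⟨h1, h2⟩
  · exact gmap_inj γ a (Prod.ext h1 h2)
  · exact absurd (gmap_wbase γ a t')
      (fun hw => wbase_asymm _ _ hw (h2 ▸ h1 ▸ gmap_wbase γ a t))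

lemma fmap_mem (γ a : ℕ) (t : Tty γ a) : fmap γ a t ∈ (WG γ a).edgeSet := by
  rw [fmap, SimpleGraph.mem_edgeSet, WG, SimpleGraph.fromRel_adj]
  exact ⟨gmap_ne γ a t, Or.inl (gmap_wbase γ a t)⟩

lemma edge_covered (γ a : ℕ) (x y : WVert γ a) (h : Wbase γ a x y) :
    ∃ t, gmap γ a t = (x, y) := by
  rcases x with u | iv <;> rcases y with v | jw <;> simp only [Wbase] at h
  · refine ⟨.inl ⟨u.1, by have := u.2; have := v.2; omega⟩, ?_⟩
    simp only [gmap, Prod.mk.injEq, Sum.inl.injEq, Fin.ext_iff, true_and, and_true]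
    omega
  · obtain ⟨h1, h2⟩ := h
    refine ⟨.inr (.inl jw.1), ?_⟩
    simp only [gmap, Prod.mk.injEq, Sum.inl.injEq, Sum.inr.injEq, Prod.ext_iff,
      Fin.ext_iff, true_and, and_true]
    omega
  · rcases h with ⟨h1, h2⟩ | ⟨h1, h2, h3, h4⟩
    · have h1' : (iv.1 : ℕ) = (jw.1 : ℕ) := congrArg Fin.val h1
      refine ⟨.inr (.inr (.inl (iv.1, ⟨iv.2.1, by have := jw.2.2; omega⟩))), ?_⟩
      simp only [gmap, Prod.mk.injEq, Sum.inr.injEq, Prod.ext_iff, Fin.ext_iff, true_and, and_true]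
      omega
    · refine ⟨.inr (.inr (.inr ⟨iv.1.1 - 1, by have := iv.1.2; omega⟩)), ?_⟩
      simp only [gmap, Prod.mk.injEq, Sum.inr.injEq, Prod.ext_iff, Fin.ext_iff, true_and, and_true]
      omega

lemma edgeSet_eq (γ a : ℕ) : (WG γ a).edgeSet = Set.range (fmap γ a) := by
  ext e
  refine e.ind (fun x y => ?_)
  constructor
  · rw [SimpleGraph.mem_edgeSet, WG, SimpleGraph.fromRel_adj]
    rintro ⟨hne, h | h⟩
    · obtain ⟨t, ht⟩ := edge_covered γ a x y h
      exact ⟨t, by rw [fmap, ht]⟩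
    · obtain ⟨t, ht⟩ := edge_covered γ a y x h
      exact ⟨t, by rw [fmap, ht]; exact Sym2.eq_swap⟩
  · rintro ⟨t, ht⟩
    rw [← ht]
    exact fmap_mem γ a t

/-- For all a ≥ 1 and γ ≥ 0, the graph W_a^γ has exactly
a + (γ+1)(4^a−1)/3 vertices and exactly a + (γ+2)(4^a−1)/3 − 2 edges. -/
theorem stmt15 (a γ : ℕ) (ha : 1 ≤ a) :
    (Nat.card (WVert γ a) : ℝ) = (a : ℝ) + ((γ : ℝ) + 1) * ((4 : ℝ) ^ a - 1) / 3 ∧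
    (Nat.card (WG γ a).edgeSet : ℝ) =
      (a : ℝ) + ((γ : ℝ) + 2) * ((4 : ℝ) ^ a - 1) / 3 - 2 := by
  have hω := three_mul_ωr a
  have hωpos := ωr4_pos a ha
  have hcast : (ωr 4 a : ℝ) = ((4 : ℝ) ^ a - 1) / 3 := by
    have h4 : 1 ≤ (4 : ℕ) ^ a := Nat.one_le_pow _ _ (by norm_num)
    have h : ((3 * ωr 4 a : ℕ) : ℝ) = ((4 ^ a - 1 : ℕ) : ℝ) := congrArg _ hω
    push_cast [Nat.cast_sub h4] at h
    linarith
  constructor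
  · rw [Nat.card_eq_fintype_card]
    simp only [WVert, Fintype.card_sum, Fintype.card_prod, Fintype.card_fin]
    push_cast
    rw [hcast]; ring
  · rw [edgeSet_eq, Nat.card_range_of_injective (fmap_inj γ a), Nat.card_eq_fintype_card]
    simp only [Tty, Fintype.card_sum, Fintype.card_prod, Fintype.card_fin]
    have h : ((a - 1 + (ωr 4 a + (ωr 4 a * γ + (ωr 4 a - 1))) : ℕ) : ℝ)
        = (a : ℝ) - 1 + ((ωr 4 a : ℝ) + ((ωr 4 a : ℝ) * γ + ((ωr 4 a : ℝ) - 1))) := by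
      push_cast [Nat.cast_sub ha, Nat.cast_sub hωpos]; ring
    rw [h, hcast]; ring
end
end

section
/- Let α ∈ (0,1/2), let γ be an integer with γ > (3α−1)/(1−2α) (so that (1−α)/k_γ < 1), and let (1−α)/k_γ < C₁ < C₂ < 1. Then there exist a strictly increasing sequence (n_i) of positive integers and integers a_i ≥ 1 such that for all sufficiently large i, C₁·k_γ·f(n_i) ≤ a_i + (γ+1)(4^{a_i}−1)/3 ≤ C₂·k_γ·f(n_i). -/
open Filter FirstOrder

noncomputable section

/-!
For each `a` take the least `n` with `g a ≤ C₂ k f(n)`, where `g a = a + (γ+1)(4^a-1)/3`.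
Since `f(x+1) - f(x) = O(log x) = o(f(x))`, eventually `C₁ f(n+1) ≤ C₂ f(n)`, so minimality of
`n` also gives `C₁ k f(n) ≤ g a`. These least `n` tend to infinity with `a`, so along a
subsequence of `a` they are strictly increasing.
-/

section Sandwich

variable {β : Type*} [LinearOrder β] [NoMaxOrder β] {L U g : ℕ → β}

theorem exists_tendsto_sandwich (hU : Tendsto U atTop atTop) (hg : Tendsto g atTop atTop)
    (hstep : ∀ᶠ n in atTop, L (n + 1) ≤ U n) :
    ∃ N : ℕ → ℕ, Tendsto N atTop atTop ∧ ∀ᶠ j in atTop, L (N j) ≤ g j ∧ g j ≤ U (N j) := by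
  classical
  have hex : ∀ j, ∃ n, g j ≤ U n := fun j => (hU.eventually_ge_atTop (g j)).exists
  have hmin : ∀ j, ∀ m < Nat.find (hex j), U m < g j := fun j _ hm =>
    not_le.1 (Nat.find_min (hex j) hm)
  have hN : Tendsto (fun j => Nat.find (hex j)) atTop atTop := by
    refine tendsto_atTop.2 fun b => ?_
    filter_upwards [(Finset.range b).eventually_all.2 fun m _ => hg.eventually_gt_atTop (U m)]
      with j hj
    by_contra! hjb
    exact (hj _ (Finset.mem_range.2 hjb)).not_ge (Nat.find_spec (hex j))
  obtain ⟨n₀, hn₀⟩ := eventually_atTop.1 hstep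
  refine ⟨_, hN, ?_⟩
  filter_upwards [hN.eventually_ge_atTop (n₀ + 1)] with j hj
  refine ⟨?_, Nat.find_spec (hex j)⟩
  calc L (Nat.find (hex j)) = L (Nat.find (hex j) - 1 + 1) := by
        rw [Nat.sub_add_cancel (by omega)]
    _ ≤ U (Nat.find (hex j) - 1) := hn₀ _ (by omega)
    _ ≤ g j := (hmin j _ (by omega)).le

theorem exists_strictMono_sandwich (hU : Tendsto U atTop atTop) (hg : Tendsto g atTop atTop)
    (hstep : ∀ᶠ n in atTop, L (n + 1) ≤ U n) :
    ∃ n a : ℕ → ℕ, StrictMono n ∧ StrictMono a ∧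
      ∀ᶠ i in atTop, L (n i) ≤ g (a i) ∧ g (a i) ≤ U (n i) := by
  obtain ⟨N, hN, hsand⟩ := exists_tendsto_sandwich hU hg hstep
  obtain ⟨a, ha, hNa⟩ := strictMono_subseq_of_tendsto_atTop hN
  exact ⟨N ∘ a, a, hNa, ha, ha.tendsto_atTop.eventually hsand⟩

end Sandwich

theorem kcoef_pos {α : ℝ} (hα : α < 1 / 2) (γ : ℕ) : 0 < kcoef α γ := by
  have hγ : (0 : ℝ) ≤ γ := Nat.cast_nonneg γ
  have h : α * ((γ : ℝ) + 2) < (γ : ℝ) + 1 := by nlinarith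
  have : α * ((γ : ℝ) + 2) / ((γ : ℝ) + 1) < 1 := (div_lt_one (by positivity)).2 h
  unfold kcoef
  linarith

theorem tendsto_ff_atTop {α : ℝ} (hα : 0 < α) : Tendsto (ff α) atTop atTop :=
  (tendsto_rpow_atTop hα).atTop_mul_atTop₀ Real.tendsto_log_atTop

theorem ff_add_one_le {α x : ℝ} (hα0 : 0 ≤ α) (hα1 : α ≤ 1) (hx : 1 ≤ x) :
    ff α (x + 1) ≤ ff α x + Real.log x + 2 := by
  have hx0 : 0 < x := by linarith
  have hpow : (x + 1) ^ α ≤ x ^ α + 1 := by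
    simpa using Real.rpow_add_le_add_rpow hx0.le zero_le_one hα0 hα1
  have hlog : Real.log (x + 1) ≤ Real.log x + 1 / x := by
    have h := Real.log_le_sub_one_of_pos (show 0 < (x + 1) / x by positivity)
    rw [Real.log_div (by positivity) hx0.ne',
      show (x + 1) / x - 1 = 1 / x by field_simp; ring] at h
    linarith
  have hpow_le : x ^ α / x ≤ 1 :=
    (div_le_one hx0).2 (Real.rpow_le_self_of_one_le hx hα1)
  have hinv : 1 / x ≤ 1 := (div_le_one hx0).2 hx
  calc (x + 1) ^ α * Real.log (x + 1) ≤ (x ^ α + 1) * (Real.log x + 1 / x) := by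
        gcongr
        exact Real.log_nonneg (by linarith)
    _ = x ^ α * Real.log x + Real.log x + (x ^ α / x + 1 / x) := by field_simp
    _ ≤ x ^ α * Real.log x + Real.log x + 2 := by linarith

theorem eventually_mul_ff_add_one_le {α C₁ C₂ : ℝ} (hα0 : 0 < α) (hα1 : α ≤ 1) (hC₁ : 0 ≤ C₁)
    (hC : C₁ < C₂) : ∀ᶠ x : ℝ in atTop, C₁ * ff α (x + 1) ≤ C₂ * ff α x := by
  filter_upwards [(tendsto_rpow_atTop hα0).eventually_ge_atTop (2 * C₁ / (C₂ - C₁)),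
    Real.tendsto_log_atTop.eventually_ge_atTop 2, eventually_ge_atTop 1] with x hpow hlog hx
  have hpow' : 2 * C₁ ≤ x ^ α * (C₂ - C₁) := (div_le_iff₀ (by linarith)).1 hpow
  have hstep := mul_le_mul_of_nonneg_left (ff_add_one_le hα0.le hα1 hx) hC₁
  have hgap : C₁ * (Real.log x + 2) ≤ (C₂ - C₁) * ff α x := by
    unfold ff
    nlinarith [mul_le_mul_of_nonneg_right hpow' (by linarith : (0 : ℝ) ≤ Real.log x)]
  linarith

theorem stmt17_general (α : ℝ) (hα0 : 0 < α) (hα : α < 1 / 2) (γ : ℕ)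
    (C₁ C₂ : ℝ) (hC1 : (1 - α) / kcoef α γ < C₁) (hC12 : C₁ < C₂) :
    ∃ n : ℕ → ℕ, StrictMono n ∧ (∀ i, 0 < n i) ∧
      ∃ a : ℕ → ℕ, (∀ i, 1 ≤ a i) ∧
        ∀ᶠ i : ℕ in atTop,
          C₁ * kcoef α γ * ff α (n i) ≤ (a i : ℝ) + ((γ : ℝ) + 1) * ((4 : ℝ) ^ a i - 1) / 3 ∧
          (a i : ℝ) + ((γ : ℝ) + 1) * ((4 : ℝ) ^ a i - 1) / 3 ≤ C₂ * kcoef α γ * ff α (n i) := by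
  have hk := kcoef_pos hα γ
  have hC₁ : 0 < C₁ := (div_pos (by linarith) hk).trans hC1
  have hU : Tendsto (fun m : ℕ => C₂ * kcoef α γ * ff α m) atTop atTop :=
    ((tendsto_ff_atTop hα0).comp tendsto_natCast_atTop_atTop).const_mul_atTop
      (mul_pos (hC₁.trans hC12) hk)
  have hg : Tendsto (fun a : ℕ => (a : ℝ) + ((γ : ℝ) + 1) * ((4 : ℝ) ^ a - 1) / 3) atTop atTop :=
    tendsto_atTop_mono (fun a => le_add_of_nonneg_right <| div_nonneg (mul_nonneg (by positivity)
      (sub_nonneg.2 (one_le_pow₀ (by norm_num)))) (by norm_num)) tendsto_natCast_atTop_atTop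
  have hstep : ∀ᶠ m : ℕ in atTop, C₁ * kcoef α γ * ff α ↑(m + 1) ≤ C₂ * kcoef α γ * ff α m := by
    filter_upwards [tendsto_natCast_atTop_atTop.eventually
      (eventually_mul_ff_add_one_le hα0 (by linarith) (mul_pos hC₁ hk).le
        (mul_lt_mul_of_pos_right hC12 hk))] with m hm
    exact_mod_cast hm
  obtain ⟨n, a, hn, ha, hsand⟩ :=
    exists_strictMono_sandwich (L := fun m : ℕ => C₁ * kcoef α γ * ff α m) hU hg hstep
  -- dropping the first index makes both strictly increasing sequences positive
  refine ⟨fun i => n (i + 1), hn.comp (strictMono_id.add_const 1), fun i => ?_,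
    fun i => a (i + 1), fun i => ?_, (tendsto_add_atTop_nat 1).eventually hsand⟩
  · exact (Nat.zero_le _).trans_lt (hn i.lt_succ_self)
  · exact (Nat.zero_le _).trans_lt (ha i.lt_succ_self)

/-- Let α ∈ (0,1/2), γ > (3α−1)/(1−2α), and (1−α)/k_γ < C₁ < C₂ < 1. Then
there exist a strictly increasing sequence (n_i) of positive integers and integers
a_i ≥ 1 such that for all sufficiently large i,
C₁·k_γ·f(n_i) ≤ a_i + (γ+1)(4^{a_i}−1)/3 ≤ C₂·k_γ·f(n_i). -/
theorem stmt17 (α : ℝ) (hα0 : 0 < α) (hα : α < 1 / 2) (γ : ℕ)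
    (hγ : (γ : ℝ) > (3 * α - 1) / (1 - 2 * α))
    (C₁ C₂ : ℝ) (hC1 : (1 - α) / kcoef α γ < C₁) (hC12 : C₁ < C₂) (hC2 : C₂ < 1) :
    ∃ n : ℕ → ℕ, StrictMono n ∧ (∀ i, 0 < n i) ∧
      ∃ a : ℕ → ℕ, (∀ i, 1 ≤ a i) ∧
        ∀ᶠ i : ℕ in atTop,
          C₁ * kcoef α γ * ff α (n i) ≤ (a i : ℝ) + ((γ : ℝ) + 1) * ((4 : ℝ) ^ a i - 1) / 3 ∧
          (a i : ℝ) + ((γ : ℝ) + 1) * ((4 : ℝ) ^ a i - 1) / 3 ≤ C₂ * kcoef α γ * ff α (n i) :=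
  stmt17_general α hα0 hα γ C₁ C₂ hC1 hC12
end
end

section
/- Let α ∈ (0,1), let 0 < β < α, let γ ≥ 0 be an integer, and let ε > 0. Then for every sufficiently large integer r ≥ 2 the following holds: setting n_i = 2·⌊((γ+1)·ω_r(ω_r(2i)))^{1/β}⌋ and m_i = 2·⌊((γ+1)·ω_r(ω_r(2i+1)))^{1/β}⌋, for all sufficiently large i one has V_{γ,r}(2i) ≤ n_i^β and V_{γ,r}(2i+1) > 2(1 − α(γ+2)/(γ+1))·n_i^α·ln n_i + ε, and also V_{γ,r}(2i+1) ≤ m_i^β and V_{γ,r}(2i+2) > 2(1 − α(γ+2)/(γ+1))·m_i^α·ln m_i + ε. -/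
open Filter FirstOrder

noncomputable section

/-!
Write `X = (γ+1) ω_r(ω_r(a))` and `n = 2⌊X^{1/β}⌋`. Once `X^{1/β} ≥ 3` we have
`n^β ≥ (4/3)^β X`, and the remaining terms `a + 2(γ+1) ω_r(a)` of `V_{γ,r}(a)` are `o(X)`
because `ω_r` grows exponentially; hence `V_{γ,r}(a) ≤ n^β`. On the other side
`k_γ n^α ln n + ε ≤ 9 X^{2/β}`, while `V_{γ,r}(a+1) ≥ ω_r(r ω_r(a) + 1) ≥ r^{r ω_r(a)}`.
As `X ≤ (γ+1) r^{ω_r(a)}` and `r ≥ 4/β`, the square of `9 X^{2/β}` is at most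
`81 (γ+1)^r r^{r ω_r(a)}`, which is eventually below `r^{2 r ω_r(a)}`.
-/

open Asymptotics

section Omega

variable {r : ℕ}

theorem ωr_eq_sum_range_pow (hr : 2 ≤ r) (a : ℕ) : ωr r a = ∑ k ∈ Finset.range a, r ^ k :=
  (Nat.geomSum_eq hr a).symm

theorem ωr_succ (hr : 2 ≤ r) (a : ℕ) : ωr r (a + 1) = r * ωr r a + 1 := by
  simp only [ωr_eq_sum_range_pow hr, Finset.sum_range_succ', Finset.mul_sum, pow_succ', pow_zero]

theorem ωr_succ_eq_add_pow (hr : 2 ≤ r) (a : ℕ) : ωr r (a + 1) = ωr r a + r ^ a := by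
  simp only [ωr_eq_sum_range_pow hr, Finset.sum_range_succ]

theorem pow_le_ωr_succ (hr : 2 ≤ r) (a : ℕ) : r ^ a ≤ ωr r (a + 1) := by
  rw [ωr_succ_eq_add_pow hr]
  exact Nat.le_add_left _ _

theorem ωr_lt_pow (hr : 2 ≤ r) (a : ℕ) : ωr r a < r ^ a := by
  have h₁ := ωr_succ hr a
  have h₂ := ωr_succ_eq_add_pow hr a
  have := Nat.mul_le_mul_right (ωr r a) hr
  omega

theorem le_ωr (hr : 2 ≤ r) (a : ℕ) : a ≤ ωr r a := by
  induction a with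
  | zero => exact Nat.zero_le _
  | succ a ih =>
    rw [ωr_succ_eq_add_pow hr]
    have := Nat.one_le_pow a r (by omega)
    omega

theorem tendsto_ωr (hr : 2 ≤ r) : Tendsto (ωr r) atTop atTop :=
  tendsto_atTop_mono (le_ωr hr) tendsto_id

theorem isLittleO_natCast_ωr (hr : 2 ≤ r) :
    (fun b : ℕ => (b : ℝ)) =o[atTop] fun b => (ωr r b : ℝ) := by
  refine (isLittleO_coe_const_pow_of_one_lt (R := ℝ) (r := r) (by exact_mod_cast hr)).trans_isBigO
    (IsBigO.of_bound r ?_)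
  filter_upwards [eventually_ge_atTop 1] with b hb
  have h₁ := ωr_succ hr b
  have h₂ := ωr_succ_eq_add_pow hr b
  have : 1 ≤ ωr r b := hb.trans (le_ωr hr b)
  have : r ^ b ≤ r * ωr r b := by omega
  simp only [Real.norm_natCast, norm_pow]
  exact_mod_cast this

theorem eventually_add_mul_ωr_le_mul_ωr_ωr (hr : 2 ≤ r) {C c : ℝ} (hC : 0 ≤ C) (hc : 0 < c) :
    ∀ᶠ a : ℕ in atTop, (a : ℝ) + C * ωr r a ≤ c * ωr r (ωr r a) := by
  have hbig : (fun a : ℕ => (a : ℝ) + C * ωr r a) =O[atTop] fun a => (ωr r a : ℝ) := by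
    refine IsBigO.of_bound (1 + C) (Eventually.of_forall fun a => ?_)
    have : (a : ℝ) ≤ ωr r a := by exact_mod_cast le_ωr hr a
    rw [Real.norm_of_nonneg (by positivity), Real.norm_natCast]
    linarith
  have hlittle := (isLittleO_natCast_ωr hr).comp_tendsto (tendsto_ωr hr)
  filter_upwards [(hbig.trans_isLittleO hlittle).bound hc] with a ha
  rwa [Real.norm_of_nonneg (by positivity), Function.comp_apply, Real.norm_natCast] at ha

end Omega

theorem kcoef_mul_ff_le_two_mul_sq {α x : ℝ} (hα₀ : 0 ≤ α) (hα₁ : α ≤ 1) (γ : ℕ) (hx : 1 ≤ x) :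
    kcoef α γ * ff α x ≤ 2 * x ^ 2 := by
  have hk : kcoef α γ ≤ 2 := by
    have : 0 ≤ α * ((γ : ℝ) + 2) / ((γ : ℝ) + 1) := by positivity
    rw [kcoef]
    linarith
  have hpow : x ^ α ≤ x := by
    simpa using Real.rpow_le_rpow_of_exponent_le hx hα₁
  have hlog : Real.log x ≤ x := (Real.log_le_sub_one_of_pos (by positivity)).trans (by linarith)
  have hff : 0 ≤ ff α x := mul_nonneg (by positivity) (Real.log_nonneg hx)
  calc kcoef α γ * ff α x ≤ 2 * ff α x := mul_le_mul_of_nonneg_right hk hff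
    _ ≤ 2 * x ^ 2 := by
      rw [ff, sq]
      gcongr
      exact Real.log_nonneg hx

theorem four_thirds_mul_le_two_mul_floor {y : ℝ} (hy : 3 ≤ y) : 4 / 3 * y ≤ 2 * ⌊y⌋₊ := by
  linarith [Nat.lt_floor_add_one y]

theorem nine_mul_sq_rpow_lt_pow {β K X : ℝ} {r w : ℕ} (hβ : 0 < β) (hrβ : 4 / β ≤ r)
    (hX : 1 ≤ X) (hXK : X ≤ K * (r : ℝ) ^ w) (hKr : 81 * K ^ r < (r : ℝ) ^ (r * w)) :
    9 * (X ^ (1 / β)) ^ 2 < (r : ℝ) ^ (r * w) := by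
  have hr : (0 : ℝ) < r := (by positivity : (0 : ℝ) < 4 / β).trans_le hrβ
  have hfour : (X ^ (1 / β)) ^ 4 ≤ X ^ r := by
    rw [← Real.rpow_natCast, ← Real.rpow_mul (by linarith), ← Real.rpow_natCast]
    exact Real.rpow_le_rpow_of_exponent_le hX (by push_cast; rwa [one_div_mul_eq_div])
  refine lt_of_pow_lt_pow_left₀ 2 (by positivity) ?_
  calc (9 * (X ^ (1 / β)) ^ 2) ^ 2 = 81 * (X ^ (1 / β)) ^ 4 := by ring
    _ ≤ 81 * (K * (r : ℝ) ^ w) ^ r := by gcongr; exact hfour.trans (by gcongr)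
    _ = 81 * K ^ r * (r : ℝ) ^ (r * w) := by ring
    _ < (r : ℝ) ^ (r * w) * (r : ℝ) ^ (r * w) := by gcongr
    _ = ((r : ℝ) ^ (r * w)) ^ 2 := by ring

/-- `nSeq β γ r (2 * i)` and `nSeq β γ r (2 * i + 1)` are the `n_i` and `m_i` of the statement. -/
def nSeq (β : ℝ) (γ r a : ℕ) : ℕ :=
  2 * ⌊(((γ : ℝ) + 1) * (ωr r (ωr r a) : ℝ)) ^ ((1 : ℝ) / β)⌋₊

section Bounds

variable {β : ℝ} {γ r a : ℕ}

theorem Vnum_le_nSeq_rpow (hβ : 0 < β)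
    (hy : 3 ≤ (((γ : ℝ) + 1) * ωr r (ωr r a)) ^ (1 / β))
    (hsmall : (a : ℝ) + 2 * ((γ : ℝ) + 1) * ωr r a ≤
      ((4 / 3) ^ β - 1) * (((γ : ℝ) + 1) * ωr r (ωr r a))) :
    (Vnum γ r a : ℝ) ≤ (nSeq β γ r a : ℝ) ^ β := by
  set X : ℝ := ((γ : ℝ) + 1) * ωr r (ωr r a)
  have hX : 0 ≤ X := by positivity
  calc (Vnum γ r a : ℝ) = ((a : ℝ) + 2 * ((γ : ℝ) + 1) * ωr r a) + X := by
        simp only [Vnum, X]; push_cast; ring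
    _ ≤ (4 / 3) ^ β * X := by linarith
    _ = (4 / 3 * X ^ (1 / β)) ^ β := by
        rw [Real.mul_rpow (by norm_num) (by positivity), ← Real.rpow_mul hX,
          one_div_mul_cancel hβ.ne', Real.rpow_one]
    _ ≤ (nSeq β γ r a : ℝ) ^ β := by
        gcongr
        simpa [nSeq] using four_thirds_mul_le_two_mul_floor hy

theorem kcoef_mul_ff_nSeq_add_lt_Vnum_succ {α ε : ℝ} (hα₀ : 0 ≤ α) (hα₁ : α ≤ 1) (hr : 2 ≤ r)
    (hβ : 0 < β) (hrβ : 4 / β ≤ r)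
    (hy : max 3 ε ≤ (((γ : ℝ) + 1) * ωr r (ωr r a)) ^ (1 / β))
    (hpow : 81 * ((γ : ℝ) + 1) ^ r < (r : ℝ) ^ (r * ωr r a)) :
    kcoef α γ * ff α (nSeq β γ r a) + ε < Vnum γ r (a + 1) := by
  set X : ℝ := ((γ : ℝ) + 1) * ωr r (ωr r a)
  set y : ℝ := X ^ (1 / β)
  set N : ℝ := (nSeq β γ r a : ℝ)
  have hy₃ : 3 ≤ y := le_of_max_le_left hy
  have hN : 4 / 3 * y ≤ N ∧ N ≤ 2 * y := by
    simp only [N, nSeq, Nat.cast_mul, Nat.cast_ofNat]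
    exact ⟨four_thirds_mul_le_two_mul_floor hy₃, by linarith [Nat.floor_le (by linarith : 0 ≤ y)]⟩
  have hX : 1 ≤ X := by
    by_contra! h
    linarith [Real.rpow_le_one (by positivity : 0 ≤ X) h.le (by positivity : 0 ≤ 1 / β)]
  have hXK : X ≤ ((γ : ℝ) + 1) * (r : ℝ) ^ ωr r a :=
    mul_le_mul_of_nonneg_left (by exact_mod_cast (ωr_lt_pow hr _).le) (by positivity)
  have hsucc : r ^ (r * ωr r a) ≤ ωr r (ωr r (a + 1)) := by
    rw [ωr_succ hr a]
    exact pow_le_ωr_succ hr _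
  have hVnum : ωr r (ωr r (a + 1)) ≤ Vnum γ r (a + 1) :=
    (Nat.le_mul_of_pos_left _ (Nat.succ_pos γ)).trans (Nat.le_add_left _ _)
  calc kcoef α γ * ff α N + ε ≤ 2 * N ^ 2 + ε := by
        linarith [kcoef_mul_ff_le_two_mul_sq hα₀ hα₁ γ (by linarith [hN.1] : (1 : ℝ) ≤ N)]
    _ ≤ 9 * y ^ 2 := by nlinarith [le_of_max_le_right hy]
    _ < (r : ℝ) ^ (r * ωr r a) := nine_mul_sq_rpow_lt_pow hβ hrβ hX hXK hpow
    _ ≤ Vnum γ r (a + 1) := by exact_mod_cast hsucc.trans hVnum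

theorem eventually_nSeq_bounds {α : ℝ} (hα₀ : 0 ≤ α) (hα₁ : α ≤ 1) (hβ : 0 < β) (ε : ℝ)
    (hr : 2 ≤ r) (hrβ : 4 / β ≤ r) :
    ∀ᶠ a : ℕ in atTop, (Vnum γ r a : ℝ) ≤ (nSeq β γ r a : ℝ) ^ β ∧
      kcoef α γ * ff α (nSeq β γ r a) + ε < Vnum γ r (a + 1) := by
  have hX : Tendsto (fun a => ((γ : ℝ) + 1) * ωr r (ωr r a)) atTop atTop :=
    (tendsto_natCast_atTop_atTop.comp ((tendsto_ωr hr).comp (tendsto_ωr hr))).const_mul_atTop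
      (by positivity)
  have hy := (tendsto_rpow_atTop (one_div_pos.2 hβ)).comp hX
  have hc : 0 < (4 / 3 : ℝ) ^ β - 1 := by
    linarith [Real.one_lt_rpow (by norm_num : (1 : ℝ) < 4 / 3) hβ]
  have hsmall := eventually_add_mul_ωr_le_mul_ωr_ωr hr (by positivity : 0 ≤ 2 * ((γ : ℝ) + 1)) hc
  have hexp : Tendsto (fun a => r * ωr r a) atTop atTop :=
    tendsto_atTop_mono (fun a => Nat.le_mul_of_pos_left _ (by omega)) (tendsto_ωr hr)
  have hpow := (tendsto_pow_atTop_atTop_of_one_lt (by exact_mod_cast hr : (1 : ℝ) < r)).comp hexp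
  filter_upwards [hy.eventually_ge_atTop (max 3 ε), hsmall,
    hpow.eventually_gt_atTop (81 * ((γ : ℝ) + 1) ^ r)] with a hya hsa hpa
  refine ⟨Vnum_le_nSeq_rpow hβ (le_of_max_le_left hya) (hsa.trans ?_),
    kcoef_mul_ff_nSeq_add_lt_Vnum_succ hα₀ hα₁ hr hβ hrβ hya hpa⟩
  exact mul_le_mul_of_nonneg_left (le_mul_of_one_le_left (by positivity) (by simp)) hc.le

end Bounds

theorem stmt19_general (α β : ℝ) (hα0 : 0 < α) (hα1 : α < 1) (hβ0 : 0 < β)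
    (γ : ℕ) (ε : ℝ) :
    ∃ r₀ : ℕ, ∀ r : ℕ, r₀ ≤ r → 2 ≤ r →
      ∀ n m : ℕ → ℕ,
        (∀ i, n i = 2 * ⌊((((γ : ℝ) + 1) * (ωr r (ωr r (2 * i)) : ℝ)) ^ ((1 : ℝ) / β))⌋₊) →
        (∀ i, m i = 2 * ⌊((((γ : ℝ) + 1) * (ωr r (ωr r (2 * i + 1)) : ℝ)) ^ ((1 : ℝ) / β))⌋₊) →
        ∀ᶠ i : ℕ in atTop,
          (Vnum γ r (2 * i) : ℝ) ≤ (n i : ℝ) ^ β ∧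
          (Vnum γ r (2 * i + 1) : ℝ) >
            2 * (1 - α * ((γ : ℝ) + 2) / ((γ : ℝ) + 1)) * (n i : ℝ) ^ α * Real.log (n i) + ε ∧
          (Vnum γ r (2 * i + 1) : ℝ) ≤ (m i : ℝ) ^ β ∧
          (Vnum γ r (2 * i + 2) : ℝ) >
            2 * (1 - α * ((γ : ℝ) + 2) / ((γ : ℝ) + 1)) * (m i : ℝ) ^ α * Real.log (m i) + ε := by
  refine ⟨⌈4 / β⌉₊, fun r hr₀ hr n m hn hm => ?_⟩
  have hrβ : 4 / β ≤ r := (Nat.le_ceil _).trans (by exact_mod_cast hr₀)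
  have H := eventually_nSeq_bounds (γ := γ) hα0.le hα1.le hβ0 ε hr hrβ
  have hk (x : ℝ) : kcoef α γ * ff α x =
      2 * (1 - α * ((γ : ℝ) + 2) / ((γ : ℝ) + 1)) * x ^ α * Real.log x := by
    rw [kcoef, ff]; ring
  have hevens : Tendsto (fun i : ℕ => 2 * i) atTop atTop :=
    tendsto_atTop_mono (fun i => Nat.le_mul_of_pos_left i two_pos) tendsto_id
  have hodds : Tendsto (fun i : ℕ => 2 * i + 1) atTop atTop := tendsto_add_atTop_nat 1 |>.comp hevens
  filter_upwards [hevens.eventually H, hodds.eventually H] with i ⟨hn₁, hn₂⟩ ⟨hm₁, hm₂⟩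
  rw [hn i, hm i, ← hk, ← hk]
  exact ⟨hn₁, hn₂, hm₁, hm₂⟩

/-- Let α ∈ (0,1), 0 < β < α, γ ≥ 0 and ε > 0. Then for every sufficiently
large r ≥ 2: setting n_i = 2⌊((γ+1)·ω_r(ω_r(2i)))^{1/β}⌋ and
m_i = 2⌊((γ+1)·ω_r(ω_r(2i+1)))^{1/β}⌋, for all sufficiently large i one has
V_{γ,r}(2i) ≤ n_i^β and V_{γ,r}(2i+1) > 2(1 − α(γ+2)/(γ+1))·n_i^α·ln n_i + ε, and also
V_{γ,r}(2i+1) ≤ m_i^β and V_{γ,r}(2i+2) > 2(1 − α(γ+2)/(γ+1))·m_i^α·ln m_i + ε. -/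
theorem stmt19 (α β : ℝ) (hα0 : 0 < α) (hα1 : α < 1) (hβ0 : 0 < β) (hβα : β < α)
    (γ : ℕ) (ε : ℝ) (hε : 0 < ε) :
    ∃ r₀ : ℕ, ∀ r : ℕ, r₀ ≤ r → 2 ≤ r →
      ∀ n m : ℕ → ℕ,
        (∀ i, n i = 2 * ⌊((((γ : ℝ) + 1) * (ωr r (ωr r (2 * i)) : ℝ)) ^ ((1 : ℝ) / β))⌋₊) →
        (∀ i, m i = 2 * ⌊((((γ : ℝ) + 1) * (ωr r (ωr r (2 * i + 1)) : ℝ)) ^ ((1 : ℝ) / β))⌋₊) →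
        ∀ᶠ i : ℕ in atTop,
          (Vnum γ r (2 * i) : ℝ) ≤ (n i : ℝ) ^ β ∧
          (Vnum γ r (2 * i + 1) : ℝ) >
            2 * (1 - α * ((γ : ℝ) + 2) / ((γ : ℝ) + 1)) * (n i : ℝ) ^ α * Real.log (n i) + ε ∧
          (Vnum γ r (2 * i + 1) : ℝ) ≤ (m i : ℝ) ^ β ∧
          (Vnum γ r (2 * i + 2) : ℝ) >
            2 * (1 - α * ((γ : ℝ) + 2) / ((γ : ℝ) + 1)) * (m i : ℝ) ^ α * Real.log (m i) + ε :=
  stmt19_general α β hα0 hα1 hβ0 γ ε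
end
end
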